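/- arXiv:2503.10107 — 4 statements merged into one kernel-verified Lean document; each statement's English description precedes it below -/
import Mathlib

section
/- Let L ≥ 1 and K ≥ L be natural numbers, let z₀, …, z_{L−1} be pairwise distinct complex numbers of modulus 1, and let D = diag(z₀, …, z_{L−1}). Let H₀ be an L×L Hermitian positive semidefinite complex matrix all of whose diagonal entries are nonzero. Then the matrix H̄ = (1/K) · Σ_{k=0}^{K−1} Dᵏ H₀ (Dᵏ)ᴴ has rank L (equivalently, H̄ is positive definite). -/
open Matrix Finset ComplexOrder

/-!
Each term `Dᵏ H₀ (Dᵏ)ᴴ` is positive semidefinite, so the sum is positive definite as soon as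
no nonzero `x` lies in the kernel of every term, i.e. satisfies `H₀ (D̄ᵏ x) = 0` for all `k < K`.
Reading off row `i`, the vector `(H₀ i j * x j)ⱼ` is annihilated by the Vandermonde matrix of the
distinct nodes `z̄ⱼ` (as `K ≥ L`), hence vanishes, and `H₀ i i ≠ 0` forces `x i = 0`.
-/

namespace Matrix

theorem diagonal_pow_conjTranspose_mulVec {α n : Type*} [Fintype n] [DecidableEq n]
    [CommSemiring α] [StarRing α] (d : n → α) (k : ℕ) (x : n → α) :
    (diagonal d ^ k)ᴴ *ᵥ x = fun j => star (d j) ^ k * x j := by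
  ext j
  simp [diagonal_pow, mulVec_diagonal]

theorem eq_zero_of_forall_mulVec_pow_mul_eq_zero {R m : Type*} [CommRing R] [IsDomain R]
    {L : ℕ} {w : Fin L → R} (hw : Function.Injective w) {H : Matrix m (Fin L) R}
    (hH : ∀ j, ∃ i, H i j ≠ 0) {x : Fin L → R}
    (h : ∀ k < L, H *ᵥ (fun j => w j ^ k * x j) = 0) : x = 0 := by
  funext j
  obtain ⟨i, hij⟩ := hH j
  have hrow : (fun j => H i j * x j) = 0 :=
    eq_zero_of_forall_pow_sum_mul_pow_eq_zero hw fun k => by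
      have hik := congrFun (h k k.2) i
      simp only [mulVec, dotProduct, Pi.zero_apply] at hik
      rw [← hik]
      exact sum_congr rfl fun _ _ => by ring
  exact (mul_eq_zero.mp (congrFun hrow j)).resolve_left hij

section PosSemidef

variable {𝕜 ι n : Type*} [RCLike 𝕜] [Fintype n]

theorem PosSemidef.mul_mul_conjTranspose_mulVec_eq_zero_iff {m : Type*} [Fintype m]
    {H : Matrix n n 𝕜} (hH : H.PosSemidef) (B : Matrix m n 𝕜) (x : m → 𝕜) :
    (B * H * Bᴴ) *ᵥ x = 0 ↔ H *ᵥ (Bᴴ *ᵥ x) = 0 := by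
  have hquad : star x ⬝ᵥ (B * H * Bᴴ) *ᵥ x = star (Bᴴ *ᵥ x) ⬝ᵥ H *ᵥ (Bᴴ *ᵥ x) := by
    rw [← mulVec_mulVec, ← mulVec_mulVec, dotProduct_mulVec, star_mulVec,
      conjTranspose_conjTranspose]
  rw [← (hH.mul_mul_conjTranspose_same B).dotProduct_mulVec_zero_iff, hquad,
    hH.dotProduct_mulVec_zero_iff]

theorem posDef_sum_of_forall_mulVec_eq_zero {A : ι → Matrix n n 𝕜} {s : Finset ι}
    (hA : ∀ i ∈ s, (A i).PosSemidef) (hker : ∀ x, (∀ i ∈ s, A i *ᵥ x = 0) → x = 0) :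
    (∑ i ∈ s, A i).PosDef := by
  refine .of_dotProduct_mulVec_pos (posSemidef_sum s hA).isHermitian fun x hx => ?_
  have hquad : star x ⬝ᵥ (∑ i ∈ s, A i) *ᵥ x = ∑ i ∈ s, star x ⬝ᵥ A i *ᵥ x := by
    rw [sum_mulVec, dotProduct_sum]
  have hnonneg : ∀ i ∈ s, 0 ≤ star x ⬝ᵥ A i *ᵥ x :=
    fun i hi => (hA i hi).dotProduct_mulVec_nonneg x
  refine (hquad ▸ sum_nonneg hnonneg).lt_of_ne' fun h => hx (hker x fun i hi => ?_)
  rw [hquad, sum_eq_zero_iff_of_nonneg hnonneg] at h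
  exact ((hA i hi).dotProduct_mulVec_zero_iff x).mp (h i hi)

end PosSemidef

end Matrix

theorem stmt_0_general (L K : ℕ) (hL : 1 ≤ L) (hK : L ≤ K)
    (z : Fin L → ℂ) (hz : Function.Injective z)
    (H₀ : Matrix (Fin L) (Fin L) ℂ) (hH₀ : H₀.PosSemidef) (hdiag : ∀ ℓ, H₀ ℓ ℓ ≠ 0) :
    ((1 / (K : ℂ)) • ∑ k ∈ Finset.range K,
      (Matrix.diagonal z ^ k) * H₀ * ((Matrix.diagonal z ^ k)ᴴ)).rank = L := by
  have hsum : (∑ k ∈ range K, diagonal z ^ k * H₀ * (diagonal z ^ k)ᴴ).PosDef := by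
    refine posDef_sum_of_forall_mulVec_eq_zero (fun k _ => hH₀.mul_mul_conjTranspose_same _)
      fun x hx => eq_zero_of_forall_mulVec_pow_mul_eq_zero (w := fun j => star (z j))
        (star_injective.comp hz) (fun j => ⟨j, hdiag j⟩) fun k hk => ?_
    rw [← diagonal_pow_conjTranspose_mulVec, ← hH₀.mul_mul_conjTranspose_mulVec_eq_zero_iff]
    exact hx k (mem_range.mpr (hk.trans_le hK))
  have hK₀ : 0 < K := by omega
  have hscale : (0 : ℂ) < 1 / (K : ℂ) := by positivity
  rw [rank_of_isUnit _ (hsum.smul hscale).isUnit, Fintype.card_fin]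

/-- Proposition 1 (frequency smoothing): averaging `Dᵏ H₀ (Dᵏ)ᴴ` over `k < K` with
`D = diag z`, `z` pairwise distinct unimodular, `H₀` Hermitian PSD with nonzero
diagonal, yields a matrix of full rank `L` (provided `K ≥ L ≥ 1`). -/
theorem stmt_0 (L K : ℕ) (hL : 1 ≤ L) (hK : L ≤ K)
    (z : Fin L → ℂ) (hz : Function.Injective z) (hz1 : ∀ ℓ, ‖z ℓ‖ = 1)
    (H₀ : Matrix (Fin L) (Fin L) ℂ) (hH₀ : H₀.PosSemidef) (hdiag : ∀ ℓ, H₀ ℓ ℓ ≠ 0) :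
    ((1 / (K : ℂ)) • ∑ k ∈ Finset.range K,
      (Matrix.diagonal z ^ k) * H₀ * ((Matrix.diagonal z ^ k)ᴴ)).rank = L :=
  stmt_0_general L K hL hK z hz H₀ hH₀ hdiag
end

section
/- Let L ≥ 1, p ≥ 1 and K ≥ L be natural numbers, let z₀, …, z_{L−1} be pairwise distinct complex numbers, and let Ψ be an L×p complex matrix each of whose rows is nonzero. For each ℓ < L define the vector g_ℓ ∈ ℂ^{K·p} indexed by pairs (k, j) with k < K, j < p, by g_ℓ(k, j) = z_ℓᵏ · Ψ_{ℓ j}. Then the family g₀, …, g_{L−1} is linearly independent. -/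
open Matrix Finset

/-- Key step of Appendix B: the rows of `G = [Ψ, DΨ, …, D^{K−1}Ψ]`, i.e. the weighted
Vandermonde-type vectors `g_ℓ(k, j) = z_ℓᵏ Ψ_{ℓ j}`, are linearly independent when the
nodes `z_ℓ` are pairwise distinct and every row of `Ψ` is nonzero. -/
theorem stmt_1 (L p K : ℕ) (hL : 1 ≤ L) (hp : 1 ≤ p) (hK : L ≤ K)
    (z : Fin L → ℂ) (hz : Function.Injective z)
    (Ψ : Matrix (Fin L) (Fin p) ℂ) (hΨ : ∀ ℓ, Ψ ℓ ≠ 0) :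
    LinearIndependent ℂ
      (fun ℓ : Fin L => fun kj : Fin K × Fin p => z ℓ ^ (kj.1 : ℕ) * Ψ ℓ kj.2) := by
  rw [Fintype.linearIndependent_iff]
  intro c hc ℓ
  have key : ∀ j : Fin p, (fun ℓ : Fin L => c ℓ * Ψ ℓ j) = 0 := by
    intro j
    apply Matrix.eq_zero_of_forall_pow_sum_mul_pow_eq_zero hz
    intro k
    have h := congrFun hc (Fin.castLE hK k, j)
    simpa [Finset.sum_apply, mul_comm, mul_assoc, mul_left_comm] using h
  obtain ⟨j, hj⟩ := Function.ne_iff.mp (hΨ ℓ)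
  have := congrFun (key j) ℓ
  simp only [Pi.zero_apply, mul_eq_zero] at this
  tauto
end

section
/- Let N > L ≥ 1, let θ₀, …, θ_{L−1} be real numbers with sin θ₀, …, sin θ_{L−1} pairwise distinct in (−1, 1], let A = [a(θ₀), …, a(θ_{L−1})] be the N×L steering matrix, let H be an L×L Hermitian positive definite matrix, let W be an N×N unitary matrix, and set M = Wᴴ A H Aᴴ W. Then for any θ with sin θ ∈ (−1, 1], the vector Wᴴ a(θ) is orthogonal to the kernel of M if and only if sin θ = sin θ_ℓ for some ℓ < L. -/
open Matrix ComplexOrder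

/-!
Since `W` is unitary, `x ↦ W x` carries `ker M` onto `ker (A H Aᴴ)`, which is `ker Aᴴ` because `H`
is positive definite; so the condition says that `a θ` is orthogonal to every `y` with `Aᴴ y = 0`.
All the vectors involved are power vectors `(zⁿ)ₙ` at the nodes `z = exp (-iπ sin θ)`, and this map
is injective for `sin θ ∈ (-1, 1]`. A column of `A` is orthogonal to `ker Aᴴ`; conversely, if the node
of `θ` is not a path node, the coefficients of the Lagrange polynomial (degree `≤ L < N`) that is `1`
at the node of `θ` and `0` at the path nodes give a `y ∈ ker Aᴴ` with `⟨y, a θ⟩ = 1`.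
-/

section LinearAlgebra

variable {m n R : Type*} [Fintype m]

theorem Matrix.conjTranspose_mulVec_eq_zero_iff [NonUnitalSemiring R] [StarRing R]
    (A : Matrix m n R) (y : m → R) : Aᴴ *ᵥ y = 0 ↔ star y ᵥ* A = 0 := by
  rw [← star_eq_zero, star_mulVec, conjTranspose_conjTranspose]

variable [Fintype n]

theorem Matrix.PosDef.mul_mul_conjTranspose_mulVec_eq_zero_iff [Ring R] [PartialOrder R]
    [StarRing R] {H : Matrix n n R} (hH : H.PosDef) (A : Matrix m n R) (x : m → R) :
    (A * H * Aᴴ) *ᵥ x = 0 ↔ Aᴴ *ᵥ x = 0 := by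
  refine ⟨fun hx => ?_, fun hx => by simp only [← mulVec_mulVec, hx, mulVec_zero]⟩
  by_contra hu
  have hquad : star (Aᴴ *ᵥ x) ⬝ᵥ H *ᵥ (Aᴴ *ᵥ x) = 0 := by
    rw [star_mulVec, conjTranspose_conjTranspose, ← dotProduct_mulVec, mulVec_mulVec,
      mulVec_mulVec, hx, dotProduct_zero]
  exact (hH.dotProduct_mulVec_pos hu).ne' hquad

theorem Matrix.forall_mem_ker_unitary_conj_iff [DecidableEq n] [CommRing R] [StarRing R]
    {W : Matrix n n R} (hW : W ∈ unitaryGroup n R) (C : Matrix n n R) (v : n → R) :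
    (∀ x ∈ LinearMap.ker (Wᴴ * C * W).mulVecLin, star x ⬝ᵥ Wᴴ *ᵥ v = 0) ↔
      ∀ y, C *ᵥ y = 0 → star y ⬝ᵥ v = 0 := by
  have hW_mul_inv : ∀ y, W *ᵥ (Wᴴ *ᵥ y) = y := fun y => by
    rw [mulVec_mulVec, ← star_eq_conjTranspose, mem_unitaryGroup_iff.mp hW, one_mulVec]
  have hW_inv_mul : ∀ x, Wᴴ *ᵥ (W *ᵥ x) = x := fun x => by
    rw [mulVec_mulVec, ← star_eq_conjTranspose, mem_unitaryGroup_iff'.mp hW, one_mulVec]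
  have hker : ∀ x, (Wᴴ * C * W) *ᵥ x = 0 ↔ C *ᵥ (W *ᵥ x) = 0 := fun x => by
    rw [← mulVec_mulVec, ← mulVec_mulVec]
    exact ⟨fun h => by rw [← hW_mul_inv (C *ᵥ _), h, mulVec_zero], fun h => by rw [h, mulVec_zero]⟩
  have hdot : ∀ x, star x ⬝ᵥ Wᴴ *ᵥ v = star (W *ᵥ x) ⬝ᵥ v := fun x => by
    rw [dotProduct_mulVec, star_mulVec]
  simp only [LinearMap.mem_ker, mulVecLin_apply, hker, hdot]
  exact ⟨fun h y => hW_mul_inv y ▸ h (Wᴴ *ᵥ y), fun h x => h (W *ᵥ x)⟩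

end LinearAlgebra

section Vandermonde

variable {K : Type*} [Field K]

theorem exists_dotProduct_pow_eq (s : Finset K) {N : ℕ} (hs : s.card ≤ N) (f : K → K) :
    ∃ u : Fin N → K, ∀ x ∈ s, u ⬝ᵥ (fun n : Fin N => x ^ (n : ℕ)) = f x := by
  classical
  set p := Lagrange.interpolate s id f
  have hinj : Set.InjOn id (s : Set K) := Set.injOn_id _
  refine ⟨fun n => p.coeff n, fun x hx => ?_⟩
  have hN : 0 < N := (Finset.card_pos.mpr ⟨x, hx⟩).trans_le hs
  have hdeg : p.natDegree < N := by
    rcases eq_or_ne p 0 with hp | hp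
    · rwa [hp, Polynomial.natDegree_zero]
    · exact (Polynomial.natDegree_lt_iff_degree_lt hp).mpr
        ((Lagrange.degree_interpolate_lt f hinj).trans_le (by exact_mod_cast hs))
  calc _ = ∑ n ∈ Finset.range N, p.coeff n * x ^ n :=
        Fin.sum_univ_eq_sum_range (fun n => p.coeff n * x ^ n) N
    _ = p.eval x := (Polynomial.eval_eq_sum_range' hdeg x).symm
    _ = f x := Lagrange.eval_interpolate_at_node f hinj hx

theorem forall_conjTranspose_vandermonde_mulVec_eq_zero_imp_iff [StarRing K] {ι : Type*}
    [Fintype ι] {N : ℕ} (hN : Fintype.card ι < N) (z : ι → K) (w : K) :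
    (∀ y : Fin N → K, (Matrix.of fun (n : Fin N) i => z i ^ (n : ℕ))ᴴ *ᵥ y = 0 →
      star y ⬝ᵥ (fun n : Fin N => w ^ (n : ℕ)) = 0) ↔ w ∈ Set.range z := by
  simp_rw [conjTranspose_mulVec_eq_zero_iff]
  refine ⟨fun h => ?_, ?_⟩
  · classical
    by_contra hw
    have hcard : (insert w (Finset.univ.image z)).card ≤ N :=
      (Finset.card_insert_le _ _).trans (Nat.succ_le_of_lt
        ((Finset.card_image_le.trans_eq Finset.card_univ).trans_lt hN))
    obtain ⟨u, hu⟩ := exists_dotProduct_pow_eq _ hcard fun x => if x = w then 1 else 0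
    have hvecMul : star (star u) ᵥ* Matrix.of (fun (n : Fin N) i => z i ^ (n : ℕ)) = 0 := by
      funext i
      rw [star_star, vecMul_apply]
      refine (hu (z i) (by simp)).trans (if_neg fun hzi => hw ⟨i, hzi⟩)
    have := h (star u) hvecMul
    rw [star_star, hu w (Finset.mem_insert_self _ _), if_pos rfl] at this
    exact one_ne_zero this
  · rintro ⟨i, rfl⟩ y hy
    exact congrFun hy i

end Vandermonde

theorem Complex.injOn_exp_neg_I_mul_pi_mul :
    Set.InjOn (fun s : ℝ => Complex.exp (-(Complex.I * Real.pi * s))) (Set.Ioc (-1) 1) := by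
  intro s hs t ht hst
  have him : ∀ r ∈ Set.Ioc (-1 : ℝ) 1,
      -Real.pi < (Complex.I * Real.pi * r).im ∧ (Complex.I * Real.pi * r).im ≤ Real.pi := by
    intro r hr
    simp only [Complex.mul_im, Complex.I_re, Complex.I_im, Complex.ofReal_re, Complex.ofReal_im]
    constructor <;> nlinarith [hr.1, hr.2, Real.pi_pos]
  simp only [Complex.exp_neg, _root_.inv_inj] at hst
  have := congrArg Complex.im
    (Complex.exp_inj_of_neg_pi_lt_of_le_pi (him s hs).1 (him s hs).2 (him t ht).1 (him t ht).2 hst)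
  simp only [Complex.mul_im, Complex.I_re, Complex.I_im, Complex.ofReal_re,
    Complex.ofReal_im] at this
  nlinarith [Real.pi_pos]

theorem stmt_9_general (N L : ℕ) (hNL : L < N) (θs : Fin L → ℝ)
    (hrange : ∀ ℓ, Real.sin (θs ℓ) ∈ Set.Ioc (-1 : ℝ) 1)
    (a : ℝ → Fin N → ℂ)
    (ha : ∀ (θ : ℝ) (n : Fin N),
      a θ n = Complex.exp (-(Complex.I * (Real.pi : ℂ) * ((n : ℕ) : ℂ) * (Real.sin θ : ℂ))))
    (A : Matrix (Fin N) (Fin L) ℂ) (hA : ∀ n ℓ, A n ℓ = a (θs ℓ) n)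
    (H : Matrix (Fin L) (Fin L) ℂ) (hH : H.PosDef)
    (W : Matrix (Fin N) (Fin N) ℂ) (hW : W ∈ Matrix.unitaryGroup (Fin N) ℂ)
    (M : Matrix (Fin N) (Fin N) ℂ) (hM : M = Wᴴ * A * H * Aᴴ * W)
    (θ : ℝ) (hθ : Real.sin θ ∈ Set.Ioc (-1 : ℝ) 1) :
    (∀ x ∈ LinearMap.ker M.mulVecLin, dotProduct (star x) (Wᴴ.mulVec (a θ)) = 0) ↔
      ∃ ℓ, Real.sin θ = Real.sin (θs ℓ) := by
  set e : ℝ → ℂ := fun s => Complex.exp (-(Complex.I * Real.pi * s))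
  have ha_pow : ∀ θ', a θ' = fun n : Fin N => e (Real.sin θ') ^ (n : ℕ) := fun θ' =>
    funext fun n => by rw [ha, ← Complex.exp_nat_mul]; congr 1; ring
  have hA_pow : A = Matrix.of fun (n : Fin N) ℓ => e (Real.sin (θs ℓ)) ^ (n : ℕ) := by
    ext n ℓ; rw [hA, ha_pow]; rfl
  rw [hM, show Wᴴ * A * H * Aᴴ * W = Wᴴ * (A * H * Aᴴ) * W by simp only [Matrix.mul_assoc],
    forall_mem_ker_unitary_conj_iff hW]
  simp_rw [hH.mul_mul_conjTranspose_mulVec_eq_zero_iff]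
  rw [hA_pow, ha_pow, forall_conjTranspose_vandermonde_mulVec_eq_zero_imp_iff (by simpa using hNL)]
  exact exists_congr fun ℓ =>
    ⟨fun h => (Complex.injOn_exp_neg_I_mul_pi_mul hθ (hrange ℓ) h.symm), fun h => by rw [h]⟩

/-- MUSIC spectrum peaks exactly at true angles: with `M = Wᴴ A H Aᴴ W` (noise-free
smoothed covariance, `A` the steering matrix of `L` paths with distinct sines, `H`
positive definite, `W` unitary), the candidate vector `Wᴴ a(θ)` is orthogonal to the
kernel of `M` iff `sin θ` coincides with one of the true path sines. -/
theorem stmt_9 (N L : ℕ) (hL : 1 ≤ L) (hNL : L < N)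
    (θs : Fin L → ℝ) (hdist : Function.Injective fun ℓ => Real.sin (θs ℓ))
    (hrange : ∀ ℓ, Real.sin (θs ℓ) ∈ Set.Ioc (-1 : ℝ) 1)
    (a : ℝ → Fin N → ℂ)
    (ha : ∀ (θ : ℝ) (n : Fin N),
      a θ n = Complex.exp (-(Complex.I * (Real.pi : ℂ) * ((n : ℕ) : ℂ) * (Real.sin θ : ℂ))))
    (A : Matrix (Fin N) (Fin L) ℂ) (hA : ∀ n ℓ, A n ℓ = a (θs ℓ) n)
    (H : Matrix (Fin L) (Fin L) ℂ) (hH : H.PosDef)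
    (W : Matrix (Fin N) (Fin N) ℂ) (hW : W ∈ Matrix.unitaryGroup (Fin N) ℂ)
    (M : Matrix (Fin N) (Fin N) ℂ) (hM : M = Wᴴ * A * H * Aᴴ * W)
    (θ : ℝ) (hθ : Real.sin θ ∈ Set.Ioc (-1 : ℝ) 1) :
    (∀ x ∈ LinearMap.ker M.mulVecLin, dotProduct (star x) (Wᴴ.mulVec (a θ)) = 0) ↔
      ∃ ℓ, Real.sin θ = Real.sin (θs ℓ) :=
  stmt_9_general N L hNL θs hrange a ha A hA H hH W hW M hM θ hθ
end

section
/- Let L ≥ 1 and K ≥ L, let z₀, …, z_{L−1} be pairwise distinct complex numbers of modulus 1 with D = diag(z₀, …, z_{L−1}), let H₀ be an L×L Hermitian positive semidefinite matrix with all diagonal entries nonzero, let A be an N_r×L complex matrix of full column rank, and let W be an N_r×N_r unitary matrix. Then the matrix Wᴴ A ((1/K) Σ_{k=0}^{K−1} Dᵏ H₀ (Dᵏ)ᴴ) Aᴴ W has rank L. -/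
open Matrix Finset ComplexOrder

/-!
If `x` annihilates the quadratic form of `Σ_{k<K} Dᵏ H₀ (Dᵏ)ᴴ`, then `H₀ (Dᵏ)ᴴ x = 0` for every
`k < K`. Reading row `ℓ` of these `K ≥ L` equations gives a Vandermonde system in the distinct
nodes `conj z_m` for the vector `(H₀ ℓ m x_m)_m`, so `H₀ ℓ m x_m = 0`; taking `m = ℓ` and using
`H₀ ℓ ℓ ≠ 0` gives `x = 0`. Hence the smoothed matrix is positive definite, and
`rank (A T Aᴴ) = rank A` for positive definite `T`, while scaling by `1/K` and conjugating by a
unitary matrix do not change rank or definiteness.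
-/

namespace Matrix

theorem eq_zero_of_forall_mulVec_diagonal_pow_mulVec_eq_zero {R : Type*} [CommRing R] [IsDomain R]
    {n : ℕ} {z : Fin n → R} (hz : Function.Injective z) {H : Matrix (Fin n) (Fin n) R}
    (hdiag : ∀ i, H i i ≠ 0) {x : Fin n → R} (h : ∀ k < n, H *ᵥ (diagonal z ^ k *ᵥ x) = 0) :
    x = 0 := by
  funext i
  have hrow : (fun j => H i j * x j) = 0 :=
    eq_zero_of_forall_pow_sum_mul_pow_eq_zero hz fun k => by
      simpa [diagonal_pow, mulVec, dotProduct, diagonal_apply, mul_assoc, mul_comm (x _)]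
        using congrFun (h k k.2) i
  simpa [hdiag i] using congrFun hrow i

theorem rank_conjTranspose_mul_mul_of_mem_unitaryGroup {R n : Type*} [CommRing R]
    [StarRing R] [Fintype n] [DecidableEq n] {W : Matrix n n R} (hW : W ∈ unitaryGroup n R)
    (M : Matrix n n R) : (Wᴴ * M * W).rank = M.rank := by
  rw [rank_mul_eq_left_of_isUnit_det _ _ (UnitaryGroup.det_isUnit ⟨W, hW⟩),
    rank_mul_eq_right_of_isUnit_det _ _ (UnitaryGroup.det_isUnit ⟨Wᴴ, Unitary.star_mem hW⟩)]

variable {𝕜 : Type*} [RCLike 𝕜]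

theorem posDef_sum_diagonal_pow_mul_mul_conjTranspose {n K : ℕ} (hK : n ≤ K)
    {z : Fin n → 𝕜} (hz : Function.Injective z) {H : Matrix (Fin n) (Fin n) 𝕜}
    (hH : H.PosSemidef) (hdiag : ∀ i, H i i ≠ 0) :
    (∑ k ∈ range K, diagonal z ^ k * H * (diagonal z ^ k)ᴴ).PosDef := by
  have hterm : ∀ k, (diagonal z ^ k * H * (diagonal z ^ k)ᴴ).PosSemidef :=
    fun k => hH.mul_mul_conjTranspose_same _
  have hsum := posSemidef_sum (range K) fun k _ => hterm k
  refine .of_dotProduct_mulVec_pos hsum.isHermitian fun x hx =>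
    (hsum.dotProduct_mulVec_nonneg x).lt_of_ne' fun h0 => hx ?_
  rw [sum_mulVec, dotProduct_sum,
    Finset.sum_eq_zero_iff_of_nonneg fun k _ => (hterm k).dotProduct_mulVec_nonneg x] at h0
  have hker : ∀ k < K, H *ᵥ ((diagonal z ^ k)ᴴ *ᵥ x) = 0 := fun k hk => by
    rw [← hH.dotProduct_mulVec_zero_iff, ← h0 k (mem_range.mpr hk)]
    simp [star_mulVec, dotProduct_mulVec, vecMul_vecMul, Matrix.mul_assoc]
  refine eq_zero_of_forall_mulVec_diagonal_pow_mulVec_eq_zero (z := star z)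
    (star_injective.comp hz) hdiag fun k hk => ?_
  simpa [diagonal_conjTranspose] using hker k (hk.trans_le hK)

theorem PosDef.rank_mul_mul_conjTranspose {m n : Type*} [Fintype m] [Fintype n] [DecidableEq n]
    {T : Matrix n n 𝕜} (hT : T.PosDef) (A : Matrix m n 𝕜) : (A * T * Aᴴ).rank = A.rank := by
  open scoped MatrixOrder in
  obtain ⟨B, hB, rfl⟩ :=
    CStarAlgebra.isStrictlyPositive_iff_eq_star_mul_self.mp hT.isStrictlyPositive
  have hfactor : A * (star B * B) * Aᴴ = (B * Aᴴ)ᴴ * (B * Aᴴ) := by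
    simp [conjTranspose_mul, star_eq_conjTranspose, Matrix.mul_assoc]
  rw [hfactor, rank_conjTranspose_mul_self,
    rank_mul_eq_right_of_isUnit_det _ _ ((isUnit_iff_isUnit_det B).mp hB), rank_conjTranspose]

end Matrix

theorem stmt_17_general (L K Nr : ℕ) (hL : 1 ≤ L) (hK : L ≤ K)
    (z : Fin L → ℂ) (hz : Function.Injective z)
    (H₀ : Matrix (Fin L) (Fin L) ℂ) (hH₀ : H₀.PosSemidef) (hdiag : ∀ ℓ, H₀ ℓ ℓ ≠ 0)
    (A : Matrix (Fin Nr) (Fin L) ℂ) (hA : A.rank = L)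
    (W : Matrix (Fin Nr) (Fin Nr) ℂ) (hW : W ∈ Matrix.unitaryGroup (Fin Nr) ℂ) :
    (Wᴴ * A * ((1 / (K : ℂ)) • ∑ k ∈ Finset.range K,
      (Matrix.diagonal z ^ k) * H₀ * ((Matrix.diagonal z ^ k)ᴴ)) * Aᴴ * W).rank = L := by
  set S := ∑ k ∈ range K, diagonal z ^ k * H₀ * (diagonal z ^ k)ᴴ
  have hK_pos : (0 : ℂ) < 1 / K := one_div_pos.mpr (Nat.cast_pos.mpr (by omega))
  have hsmoothed := (posDef_sum_diagonal_pow_mul_mul_conjTranspose hK hz hH₀ hdiag).smul hK_pos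
  calc _ = (Wᴴ * (A * ((1 / (K : ℂ)) • S) * Aᴴ) * W).rank := by simp only [Matrix.mul_assoc]
    _ = (A * ((1 / (K : ℂ)) • S) * Aᴴ).rank := rank_conjTranspose_mul_mul_of_mem_unitaryGroup hW _
    _ = L := by rw [hsmoothed.rank_mul_mul_conjTranspose, hA]

/-- Conclusion of Proposition 1 applied to the beamformed smoothed covariance: with
`D = diag z` (`z` pairwise distinct unimodular), `H₀` Hermitian PSD with nonzero diagonal,
`A` of full column rank `L`, and `W` unitary, the matrix
`Wᴴ A ((1/K) Σ_{k<K} Dᵏ H₀ (Dᵏ)ᴴ) Aᴴ W` has rank `L` (for `K ≥ L ≥ 1`). -/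
theorem stmt_17 (L K Nr : ℕ) (hL : 1 ≤ L) (hK : L ≤ K)
    (z : Fin L → ℂ) (hz : Function.Injective z) (hz1 : ∀ ℓ, ‖z ℓ‖ = 1)
    (H₀ : Matrix (Fin L) (Fin L) ℂ) (hH₀ : H₀.PosSemidef) (hdiag : ∀ ℓ, H₀ ℓ ℓ ≠ 0)
    (A : Matrix (Fin Nr) (Fin L) ℂ) (hA : A.rank = L)
    (W : Matrix (Fin Nr) (Fin Nr) ℂ) (hW : W ∈ Matrix.unitaryGroup (Fin Nr) ℂ) :
    (Wᴴ * A * ((1 / (K : ℂ)) • ∑ k ∈ Finset.range K,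
      (Matrix.diagonal z ^ k) * H₀ * ((Matrix.diagonal z ^ k)ᴴ)) * Aᴴ * W).rank = L :=
  stmt_17_general L K Nr hL hK z hz H₀ hH₀ hdiag A hA W hW
end
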